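/- arXiv:1605.03475 — 2 statements merged into one kernel-verified Lean document; each statement's English description precedes it below -/
import Mathlib

section
/- Let H ∈ (1/2, 1) and set ∂_θ K_H(θ, v) = c_H (H - 1/2) (θ/v)^{H - 1/2} (θ - v)^{H - 3/2} for 0 < v < θ. Then for all θ_1, θ_2 > 0 and all 0 < s < min(θ_1, θ_2), ∫_0^s ∂_θ K_H(θ_1, v) ∂_θ K_H(θ_2, v) dv ≤ (c_H² (H - 1/2)² / (2 - 2H)) · (max(θ_1,θ_2) - s)^{H - 1/2} · (min(θ_1,θ_2) - s)^{H - 3/2}. -/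
/-!
Write `P(v) = (θ₁ - v)(θ₂ - v)`. Up to the factor `(c_H (H - 1/2))²`, the integrand is
`(θ₁θ₂)^{H-1} v^{1-2H} P(v)^{H-2} · √(θ₁(θ₂ - v) · θ₂(θ₁ - v))`, and by AM–GM this is at most
`(θ₁θ₂)^{H-1} v^{1-2H} P(v)^{H-2} (2θ₁θ₂ - v(θ₁ + θ₂)) / 2`, which is exactly the derivative of
`G(v) = (θ₁θ₂)^{H-1} v^{2-2H} P(v)^{H-1} / (2 - 2H)`. Hence the integral is at most
`G(s) - G(0) = G(s)`. Finally `(θ₁θ₂)^{H-1} s^{2-2H} ≤ 1` because `θ₁θ₂ ≥ s²`, and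
`P(s)^{H-1} = (max - s)^{H-1/2} (min - s)^{H-3/2} ((min - s)/(max - s))^{1/2}` with the last factor
at most `1`.
-/

open MeasureTheory Real

/-- The constant `c_H` in the Volterra kernel of fractional Brownian motion. -/
noncomputable def cH (H : ℝ) : ℝ :=
  Real.sqrt ((2*H * Real.Gamma (3/2 - H)) / (Real.Gamma (H + 1/2) * Real.Gamma (2 - 2*H)))

open Set

noncomputable def kernelDeriv (H θ v : ℝ) : ℝ :=
  cH H * (H - 1/2) * (θ / v) ^ (H - 1/2) * (θ - v) ^ (H - 3/2)

noncomputable def kernelProductPrimitive (H θ₁ θ₂ v : ℝ) : ℝ :=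
  (θ₁ * θ₂) ^ (H - 1) / (2 - 2 * H) * (v ^ (2 - 2 * H) * ((θ₁ - v) * (θ₂ - v)) ^ (H - 1))

/-- No integrability of `f` is assumed: `g' ≥ 0` is integrable as the derivative of a continuous
function, and it dominates `f`. -/
theorem setIntegral_Ioo_le_sub_of_hasDerivAt_of_le {f g g' : ℝ → ℝ} {a b : ℝ} (hab : a ≤ b)
    (hcont : ContinuousOn g (Icc a b)) (hderiv : ∀ x ∈ Ioo a b, HasDerivAt g (g' x) x)
    (hf₀ : ∀ x ∈ Ioo a b, 0 ≤ f x) (hfg' : ∀ x ∈ Ioo a b, f x ≤ g' x) :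
    ∫ x in Ioo a b, f x ≤ g b - g a := by
  have hg'_int : IntegrableOn g' (Ioo a b) :=
    (intervalIntegral.integrableOn_deriv_of_nonneg hcont hderiv
      fun x hx => (hf₀ x hx).trans (hfg' x hx)).mono_set Ioo_subset_Ioc_self
  calc ∫ x in Ioo a b, f x ≤ ∫ x in Ioo a b, g' x :=
        integral_mono_of_nonneg (ae_restrict_of_forall_mem measurableSet_Ioo hf₀) hg'_int
          (ae_restrict_of_forall_mem measurableSet_Ioo hfg')
    _ = g b - g a := by
        rw [← integral_Ioc_eq_integral_Ioo, ← intervalIntegral.integral_of_le hab]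
        exact intervalIntegral.integral_eq_sub_of_hasDerivAt_of_le hab hcont hderiv
          ((intervalIntegrable_iff_integrableOn_Ioo_of_le hab).mpr hg'_int)

theorem rpow_mul_le_max_rpow_mul_min_rpow {x y : ℝ} (hx : 0 < x) (hy : 0 < y) (p : ℝ) {q : ℝ}
    (hq : 0 ≤ q) : (x * y) ^ p ≤ max x y ^ (p + q) * min x y ^ (p - q) := by
  have hmin : 0 < min x y := lt_min hx hy
  have hmax : 0 < max x y := hmin.trans_le min_le_max
  have hratio : 1 ≤ (max x y / min x y) ^ q :=
    one_le_rpow ((one_le_div hmin).mpr min_le_max) hq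
  calc (x * y) ^ p = max x y ^ p * min x y ^ p := by
        rw [← max_mul_min, mul_rpow hmax.le hmin.le]
    _ ≤ max x y ^ p * min x y ^ p * (max x y / min x y) ^ q :=
        le_mul_of_one_le_right (by positivity) hratio
    _ = max x y ^ (p + q) * min x y ^ (p - q) := by
        rw [div_rpow hmax.le hmin.le, rpow_add hmax, rpow_sub hmin]
        field_simp

section

variable {H θ₁ θ₂ : ℝ}

theorem kernelDeriv_mul_kernelDeriv (v : ℝ) :
    kernelDeriv H θ₁ v * kernelDeriv H θ₂ v = (cH H * (H - 1/2)) ^ 2 *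
      ((θ₁ / v) ^ (H - 1/2) * (θ₁ - v) ^ (H - 3/2) *
        ((θ₂ / v) ^ (H - 1/2) * (θ₂ - v) ^ (H - 3/2))) := by
  unfold kernelDeriv
  ring

theorem kernelDeriv_mul_kernelDeriv_nonneg {v : ℝ} (hv : 0 < v) (hv₁ : v < θ₁) (hv₂ : v < θ₂) :
    0 ≤ kernelDeriv H θ₁ v * kernelDeriv H θ₂ v := by
  have hθ₁ : 0 < θ₁ := hv.trans hv₁
  have hθ₂ : 0 < θ₂ := hv.trans hv₂
  have hθ₁v : 0 < θ₁ - v := sub_pos.mpr hv₁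
  have hθ₂v : 0 < θ₂ - v := sub_pos.mpr hv₂
  rw [kernelDeriv_mul_kernelDeriv]
  positivity

theorem kernelDeriv_mul_kernelDeriv_le {v : ℝ} (hv : 0 < v) (hv₁ : v < θ₁) (hv₂ : v < θ₂) :
    kernelDeriv H θ₁ v * kernelDeriv H θ₂ v ≤ (cH H * (H - 1/2)) ^ 2 * ((θ₁ * θ₂) ^ (H - 1) / 2 *
      (v ^ (1 - 2 * H) * ((θ₁ - v) * (θ₂ - v)) ^ (H - 2) * (2 * θ₁ * θ₂ - v * (θ₁ + θ₂)))) := by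
  rw [kernelDeriv_mul_kernelDeriv]
  refine mul_le_mul_of_nonneg_left ?_ (sq_nonneg _)
  have hθ₁ : 0 < θ₁ := hv.trans hv₁
  have hθ₂ : 0 < θ₂ := hv.trans hv₂
  have hθ₁v : 0 < θ₁ - v := sub_pos.mpr hv₁
  have hθ₂v : 0 < θ₂ - v := sub_pos.mpr hv₂
  have split : ∀ θ, v < θ → (θ / v) ^ (H - 1/2) * (θ - v) ^ (H - 3/2) =
      θ ^ (H - 1) * v ^ (1/2 - H) * (θ - v) ^ (H - 2) * (θ ^ (1/2 : ℝ) * (θ - v) ^ (1/2 : ℝ)) := by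
    intro θ hθ
    rw [div_rpow (hv.trans hθ).le hv.le, show H - 1/2 = H - 1 + 1/2 by ring, rpow_add (hv.trans hθ),
      show H - 3/2 = H - 2 + 1/2 by ring, rpow_add (sub_pos.mpr hθ),
      show 1/2 - H = -(H - 1 + 1/2) by ring, rpow_neg hv.le]
    ring
  have amgm : (θ₁ * (θ₂ - v)) ^ (1/2 : ℝ) * (θ₂ * (θ₁ - v)) ^ (1/2 : ℝ)
      ≤ 1/2 * (θ₁ * (θ₂ - v)) + 1/2 * (θ₂ * (θ₁ - v)) :=
    geom_mean_le_arith_mean2_weighted (by norm_num) (by norm_num) (by positivity) (by positivity)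
      (by norm_num)
  set C := θ₁ ^ (H - 1) * θ₂ ^ (H - 1) * (v ^ (1/2 - H) * v ^ (1/2 - H)) *
    ((θ₁ - v) ^ (H - 2) * (θ₂ - v) ^ (H - 2)) with hC
  calc (θ₁ / v) ^ (H - 1/2) * (θ₁ - v) ^ (H - 3/2) * ((θ₂ / v) ^ (H - 1/2) * (θ₂ - v) ^ (H - 3/2))
      = C * ((θ₁ * (θ₂ - v)) ^ (1/2 : ℝ) * (θ₂ * (θ₁ - v)) ^ (1/2 : ℝ)) := by
        rw [split θ₁ hv₁, split θ₂ hv₂, mul_rpow hθ₁.le hθ₂v.le, mul_rpow hθ₂.le hθ₁v.le]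
        ring
    _ ≤ C * (1/2 * (θ₁ * (θ₂ - v)) + 1/2 * (θ₂ * (θ₁ - v))) :=
        mul_le_mul_of_nonneg_left amgm (by positivity)
    _ = _ := by
        rw [mul_rpow hθ₁.le hθ₂.le, mul_rpow hθ₁v.le hθ₂v.le, hC, ← rpow_add hv,
          show 1/2 - H + (1/2 - H) = 1 - 2 * H by ring]
        ring

theorem hasDerivAt_kernelProductPrimitive (hH : H ≠ 1) {v : ℝ} (hv : 0 < v) (hv₁ : v < θ₁)
    (hv₂ : v < θ₂) :
    HasDerivAt (kernelProductPrimitive H θ₁ θ₂)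
      ((θ₁ * θ₂) ^ (H - 1) / 2 *
        (v ^ (1 - 2 * H) * ((θ₁ - v) * (θ₂ - v)) ^ (H - 2) * (2 * θ₁ * θ₂ - v * (θ₁ + θ₂)))) v := by
  have hP : 0 < (θ₁ - v) * (θ₂ - v) := mul_pos (sub_pos.mpr hv₁) (sub_pos.mpr hv₂)
  have hP' : HasDerivAt (fun w => (θ₁ - w) * (θ₂ - w)) (2 * v - θ₁ - θ₂) v :=
    (((hasDerivAt_id' v).const_sub θ₁).mul ((hasDerivAt_id' v).const_sub θ₂)).congr_deriv
      (by ring)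
  refine (((hasDerivAt_rpow_const (p := 2 - 2 * H) (Or.inl hv.ne')).mul
    (hP'.rpow_const (p := H - 1) (Or.inl hP.ne'))).const_mul
      ((θ₁ * θ₂) ^ (H - 1) / (2 - 2 * H))).congr_deriv ?_
  have h2H : 2 - 2 * H ≠ 0 := fun h => hH (by linarith)
  have hv_pow : v ^ (2 - 2 * H) = v ^ (1 - 2 * H) * v := by
    rw [← rpow_add_one hv.ne']
    ring_nf
  have hP_pow : ((θ₁ - v) * (θ₂ - v)) ^ (H - 1) =
      ((θ₁ - v) * (θ₂ - v)) ^ (H - 2) * ((θ₁ - v) * (θ₂ - v)) := by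
    rw [← rpow_add_one hP.ne']
    ring_nf
  rw [show 2 - 2 * H - 1 = 1 - 2 * H by ring, show H - 1 - 1 = H - 2 by ring, hv_pow, hP_pow]
  field_simp
  ring

theorem continuousOn_kernelProductPrimitive (hH : H ≤ 1) {s : ℝ} (hs₁ : s < θ₁) (hs₂ : s < θ₂) :
    ContinuousOn (kernelProductPrimitive H θ₁ θ₂) (Icc 0 s) := by
  refine continuousOn_const.mul (ContinuousOn.mul ?_ ?_)
  · exact continuousOn_id.rpow_const fun _ _ => Or.inr (by linarith)
  · refine ContinuousOn.rpow_const (by fun_prop) fun v hv => Or.inl ?_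
    exact (mul_pos (by linarith [hv.2]) (by linarith [hv.2])).ne'

theorem kernelProductPrimitive_zero (hH : H ≠ 1) : kernelProductPrimitive H θ₁ θ₂ 0 = 0 := by
  have h2H : 2 - 2 * H ≠ 0 := fun h => hH (by linarith)
  simp [kernelProductPrimitive, zero_rpow h2H]

theorem kernelProductPrimitive_le (hH : H ≤ 1) {s : ℝ} (hs : 0 < s) (hs₁ : s < θ₁)
    (hs₂ : s < θ₂) :
    kernelProductPrimitive H θ₁ θ₂ s ≤ ((θ₁ - s) * (θ₂ - s)) ^ (H - 1) / (2 - 2 * H) := by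
  have hθ : (θ₁ * θ₂) ^ (H - 1) * s ^ (2 - 2 * H) ≤ 1 := by
    have hss : (s * s) ^ (H - 1) * s ^ (2 - 2 * H) = 1 := by
      rw [mul_rpow hs.le hs.le, ← rpow_add hs, ← rpow_add hs,
        show H - 1 + (H - 1) + (2 - 2 * H) = 0 by ring, rpow_zero]
    refine le_of_le_of_eq (mul_le_mul_of_nonneg_right ?_ (by positivity)) hss
    exact rpow_le_rpow_of_nonpos (by positivity) (by nlinarith) (by linarith)
  have hP : 0 ≤ ((θ₁ - s) * (θ₂ - s)) ^ (H - 1) :=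
    rpow_nonneg (mul_pos (sub_pos.mpr hs₁) (sub_pos.mpr hs₂)).le _
  calc kernelProductPrimitive H θ₁ θ₂ s
      = (θ₁ * θ₂) ^ (H - 1) * s ^ (2 - 2 * H) * ((θ₁ - s) * (θ₂ - s)) ^ (H - 1) / (2 - 2 * H) := by
        rw [kernelProductPrimitive]
        ring
    _ ≤ ((θ₁ - s) * (θ₂ - s)) ^ (H - 1) / (2 - 2 * H) :=
        div_le_div_of_nonneg_right (mul_le_of_le_one_left hP hθ) (by linarith)

end

theorem kernel_deriv_product_integral_le_general
    (H : ℝ) (hH : H ∈ Set.Ioo (1/2 : ℝ) 1) (θ₁ θ₂ s : ℝ)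
    (hs : 0 < s) (hs' : s < min θ₁ θ₂) :
    (∫ v in Set.Ioo (0:ℝ) s,
        (cH H * (H - 1/2) * (θ₁/v) ^ (H - 1/2) * (θ₁ - v) ^ (H - 3/2)) *
        (cH H * (H - 1/2) * (θ₂/v) ^ (H - 1/2) * (θ₂ - v) ^ (H - 3/2)))
      ≤ (cH H)^2 * (H - 1/2)^2 / (2 - 2*H) *
          (max θ₁ θ₂ - s) ^ (H - 1/2) * (min θ₁ θ₂ - s) ^ (H - 3/2) := by
  obtain ⟨hs₁, hs₂⟩ := lt_min_iff.mp hs'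
  set c := (cH H * (H - 1/2)) ^ 2
  change ∫ v in Ioo 0 s, kernelDeriv H θ₁ v * kernelDeriv H θ₂ v ≤ _
  refine (setIntegral_Ioo_le_sub_of_hasDerivAt_of_le hs.le
    (continuousOn_const.mul (continuousOn_kernelProductPrimitive hH.2.le hs₁ hs₂))
    (fun v hv => (hasDerivAt_kernelProductPrimitive hH.2.ne hv.1 (hv.2.trans hs₁)
      (hv.2.trans hs₂)).const_mul c)
    (fun v hv => kernelDeriv_mul_kernelDeriv_nonneg hv.1 (hv.2.trans hs₁) (hv.2.trans hs₂))
    (fun v hv => kernelDeriv_mul_kernelDeriv_le hv.1 (hv.2.trans hs₁) (hv.2.trans hs₂))).trans ?_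
  have hmaxmin := rpow_mul_le_max_rpow_mul_min_rpow (sub_pos.mpr hs₁) (sub_pos.mpr hs₂) (H - 1)
    (q := 1/2) (by norm_num)
  rw [max_sub_sub_right, min_sub_sub_right, show H - 1 + 1/2 = H - 1/2 by ring,
    show H - 1 - 1/2 = H - 3/2 by ring] at hmaxmin
  calc c * kernelProductPrimitive H θ₁ θ₂ s - c * kernelProductPrimitive H θ₁ θ₂ 0
      ≤ c * (((θ₁ - s) * (θ₂ - s)) ^ (H - 1) / (2 - 2 * H)) := by
        rw [kernelProductPrimitive_zero hH.2.ne, mul_zero, sub_zero]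
        exact mul_le_mul_of_nonneg_left (kernelProductPrimitive_le hH.2.le hs hs₁ hs₂)
          (sq_nonneg _)
    _ = (cH H)^2 * (H - 1/2)^2 / (2 - 2*H) * ((θ₁ - s) * (θ₂ - s)) ^ (H - 1) := by ring
    _ ≤ _ := by
        rw [mul_assoc]
        exact mul_le_mul_of_nonneg_left hmaxmin
          (div_nonneg (by positivity) (by linarith [hH.2]))

/-- For `H ∈ (1/2,1)`, `θ₁, θ₂ > 0` and `0 < s < min θ₁ θ₂`,
`∫_0^s ∂_θK_H(θ₁,v) ∂_θK_H(θ₂,v) dv ≤ (c_H²(H-1/2)²/(2-2H)) (θ₁∨θ₂-s)^{H-1/2} (θ₁∧θ₂-s)^{H-3/2}`,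
where `∂_θK_H(θ,v) = c_H (H-1/2) (θ/v)^{H-1/2} (θ-v)^{H-3/2}`. -/
theorem kernel_deriv_product_integral_le
    (H : ℝ) (hH : H ∈ Set.Ioo (1/2 : ℝ) 1) (θ₁ θ₂ s : ℝ)
    (h₁ : 0 < θ₁) (h₂ : 0 < θ₂) (hs : 0 < s) (hs' : s < min θ₁ θ₂) :
    (∫ v in Set.Ioo (0:ℝ) s,
        (cH H * (H - 1/2) * (θ₁/v) ^ (H - 1/2) * (θ₁ - v) ^ (H - 3/2)) *
        (cH H * (H - 1/2) * (θ₂/v) ^ (H - 1/2) * (θ₂ - v) ^ (H - 3/2)))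
      ≤ (cH H)^2 * (H - 1/2)^2 / (2 - 2*H) *
          (max θ₁ θ₂ - s) ^ (H - 1/2) * (min θ₁ θ₂ - s) ^ (H - 3/2) :=
  kernel_deriv_product_integral_le_general H hH θ₁ θ₂ s hs hs'
end

section
/- Let b̃ : ℝ → ℝ be bounded continuous, Θ ∈ ℝ, λ > 0, and suppose w : (-∞, Θ] → ℝ is a bounded C² function satisfying b̃(y) w'(y) + (1/2) w''(y) = λ w(y) for y < Θ, w(Θ) = 1, lim_{y→-∞} w(y) = 0, with 0 ≤ w ≤ 1 and w increasing. Then 0 ≤ w'(x) ≤ C(1 + λ) w(x) for all x ≤ Θ, where C depends only on ‖b̃‖_∞. -/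
/-!
Since `w` is increasing, the mean value theorem on `[x - 1, x]` gives a point `y` with
`w'(y) = w(x) - w(x - 1) ≤ w(x)`. On `[y, x]` the equation `w'' = 2λw - 2b̃w'`, together with
`w ≤ w(x)`, `w' ≥ 0` and `|b̃| ≤ M`, makes `z ↦ w'(z) - 2λ w(x) z - 2M w(z)` antitone, so
`w'(x) ≤ w'(y) + 2λ w(x) + 2M w(x) ≤ (1 + 2λ + 2M) w(x)`. At the endpoint `Θ` the bound passes
to the limit through the one-sided derivative, which is continuous on `(-∞, Θ]`.
-/

open Filter Set

theorem ContDiffOn.hasDerivAt_deriv_and_deriv_deriv {f : ℝ → ℝ} {s : Set ℝ}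
    (hf : ContDiffOn ℝ 2 f s) (hs : IsOpen s) {x : ℝ} (hx : x ∈ s) :
    HasDerivAt f (deriv f x) x ∧ HasDerivAt (deriv f) (deriv (deriv f) x) x := by
  have hf' : ContDiffOn ℝ 1 (deriv f) s := hf.deriv_of_isOpen hs (by norm_num)
  exact ⟨((hf.differentiableOn (by norm_num)).differentiableAt (hs.mem_nhds hx)).hasDerivAt,
    ((hf'.differentiableOn one_ne_zero).differentiableAt (hs.mem_nhds hx)).hasDerivAt⟩

theorem sub_le_of_ode_of_monotoneOn {f f' f'' b : ℝ → ℝ} {M lam y x : ℝ} (hyx : y ≤ x)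
    (hb : ∀ z ∈ Ioo y x, |b z| ≤ M) (hlam : 0 ≤ lam)
    (hf : ∀ z ∈ Icc y x, HasDerivAt f (f' z) z)
    (hf' : ∀ z ∈ Icc y x, HasDerivAt f' (f'' z) z)
    (hode : ∀ z ∈ Ioo y x, b z * f' z + 1 / 2 * f'' z = lam * f z)
    (hmono : MonotoneOn f (Icc y x)) :
    f' x - f' y ≤ 2 * lam * (x - y) * f x + 2 * M * (f x - f y) := by
  have hf'_nonneg : ∀ z ∈ Ioo y x, 0 ≤ f' z := fun z hz => by
    rw [← (hf z (Ioo_subset_Icc_self hz)).deriv,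
      ← derivWithin_of_mem_nhds (isOpen_Ioo.mem_nhds hz)]
    exact (hmono.mono Ioo_subset_Icc_self).derivWithin_nonneg
  have hderiv : ∀ z ∈ Icc y x, HasDerivAt (fun z => f' z - 2 * lam * f x * z - 2 * M * f z)
      (f'' z - 2 * lam * f x * 1 - 2 * M * f' z) z :=
    fun z hz => ((hf' z hz).sub ((hasDerivAt_id z).const_mul _)).sub ((hf z hz).const_mul _)
  have hanti : AntitoneOn (fun z => f' z - 2 * lam * f x * z - 2 * M * f z) (Icc y x) := by
    refine antitoneOn_of_hasDerivWithinAt_nonpos (convex_Icc y x)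
      (fun z hz => (hderiv z hz).continuousAt.continuousWithinAt)
      (fun z hz => (hderiv z (interior_subset hz)).hasDerivWithinAt) fun z hz => ?_
    rw [interior_Icc] at hz
    have hfz : f z ≤ f x := hmono (Ioo_subset_Icc_self hz) (right_mem_Icc.2 hyx) hz.2.le
    have hbz := abs_le.1 (hb z hz)
    nlinarith [hode z hz, mul_nonneg hlam (sub_nonneg.2 hfz),
      mul_nonneg (by linarith : 0 ≤ M + b z) (hf'_nonneg z hz)]
  linarith [hanti (left_mem_Icc.2 hyx) (right_mem_Icc.2 hyx) hyx]

theorem deriv_le_of_ode_of_monotoneOn {f f' f'' b : ℝ → ℝ} {M lam x : ℝ}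
    (hb : ∀ z ∈ Ioo (x - 1) x, |b z| ≤ M) (hlam : 0 ≤ lam)
    (hf : ∀ z ∈ Icc (x - 1) x, HasDerivAt f (f' z) z)
    (hf' : ∀ z ∈ Icc (x - 1) x, HasDerivAt f' (f'' z) z)
    (hode : ∀ z ∈ Ioo (x - 1) x, b z * f' z + 1 / 2 * f'' z = lam * f z)
    (hmono : MonotoneOn f (Icc (x - 1) x)) (hf_nonneg : 0 ≤ f (x - 1)) :
    f' x ≤ (1 + 2 * lam + 2 * M) * f x := by
  obtain ⟨y, hy, hy'⟩ := exists_hasDerivAt_eq_slope f f' (sub_one_lt x)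
    (fun z hz => (hf z hz).continuousAt.continuousWithinAt)
    (fun z hz => hf z (Ioo_subset_Icc_self hz))
  rw [sub_sub_cancel, div_one] at hy'
  have hIcc : Icc y x ⊆ Icc (x - 1) x := Icc_subset_Icc_left hy.1.le
  have hIoo : Ioo y x ⊆ Ioo (x - 1) x := Ioo_subset_Ioo_left hy.1.le
  have hcomp := sub_le_of_ode_of_monotoneOn hy.2.le (fun z hz => hb z (hIoo hz)) hlam
    (fun z hz => hf z (hIcc hz)) (fun z hz => hf' z (hIcc hz)) (fun z hz => hode z (hIoo hz))
    (hmono.mono hIcc)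
  have hM : 0 ≤ M := (abs_nonneg _).trans (hb y hy)
  have hfy : f (x - 1) ≤ f y :=
    hmono (left_mem_Icc.2 (by linarith)) (Ioo_subset_Icc_self hy) hy.1.le
  have hfx : f y ≤ f x := hmono (Ioo_subset_Icc_self hy) (right_mem_Icc.2 (by linarith)) hy.2.le
  have hlam_fx : 0 ≤ lam * f x := mul_nonneg hlam (hf_nonneg.trans (hfy.trans hfx))
  nlinarith [mul_nonneg hlam_fx (by linarith [hy.1] : 0 ≤ 1 - (x - y)),
    mul_nonneg hM (hf_nonneg.trans hfy)]

theorem derivWithin_Iic_le_of_deriv_le {f g : ℝ → ℝ} {a : ℝ} (hf : ContDiffOn ℝ 1 f (Iic a))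
    (hg : ContinuousOn g (Iic a)) (h : ∀ z < a, deriv f z ≤ g z) :
    ∀ x ≤ a, derivWithin f (Iic a) x ≤ g x := by
  intro x hx
  refine le_on_closure (fun z hz => ?_) ?_ ?_ (by rwa [closure_Iio])
  · rw [derivWithin_of_mem_nhds (Iic_mem_nhds hz)]
    exact h z hz
  all_goals rw [closure_Iio]
  · exact hf.continuousOn_derivWithin (uniqueDiffOn_Iic a) le_rfl
  · exact hg

/-- If `w` is a bounded `C²` solution on `(-∞,Θ]` of `b̃ w' + (1/2) w'' = λ w` on `(-∞,Θ)`,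
with `w(Θ) = 1`, `w → 0` at `-∞`, `0 ≤ w ≤ 1` and `w` increasing, then
`0 ≤ w'(x) ≤ C(1+λ) w(x)` for all `x ≤ Θ`, where `C` depends only on `‖b̃‖_∞`. -/
theorem deriv_bound_of_ode :
    ∀ M : ℝ, 0 ≤ M → ∃ C > (0:ℝ), ∀ (btilde : ℝ → ℝ) (Θ lam : ℝ) (w : ℝ → ℝ),
      Continuous btilde → (∀ x, |btilde x| ≤ M) → 0 < lam →
      ContDiffOn ℝ 2 w (Set.Iic Θ) →
      (∀ y < Θ, btilde y * deriv w y + (1/2) * deriv (deriv w) y = lam * w y) →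
      w Θ = 1 →
      Tendsto w atBot (nhds 0) →
      (∀ x ≤ Θ, 0 ≤ w x ∧ w x ≤ 1) →
      MonotoneOn w (Set.Iic Θ) →
      ∀ x ≤ Θ, 0 ≤ deriv w x ∧ deriv w x ≤ C * (1 + lam) * w x := by
  intro M hM
  refine ⟨2 * M + 2, by linarith, ?_⟩
  intro btilde Θ lam w _ hb hlam hw hode _ _ hw01 hmono
  have hw_Iio : ContDiffOn ℝ 2 w (Iio Θ) := hw.mono Iio_subset_Iic_self
  have hinterior : ∀ z < Θ, deriv w z ≤ (2 * M + 2) * (1 + lam) * w z := by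
    intro z hz
    have hsub : Icc (z - 1) z ⊆ Iio Θ := fun t ht => ht.2.trans_lt hz
    have hbound := deriv_le_of_ode_of_monotoneOn (fun t _ => hb t) hlam.le
      (fun t ht => (hw_Iio.hasDerivAt_deriv_and_deriv_deriv isOpen_Iio (hsub ht)).1)
      (fun t ht => (hw_Iio.hasDerivAt_deriv_and_deriv_deriv isOpen_Iio (hsub ht)).2)
      (fun t ht => hode t (hsub (Ioo_subset_Icc_self ht)))
      (hmono.mono (hsub.trans Iio_subset_Iic_self)) (hw01 (z - 1) (by linarith)).1
    exact hbound.trans (mul_le_mul_of_nonneg_right (by nlinarith) (hw01 z hz.le).1)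
  have hbound := derivWithin_Iic_le_of_deriv_le (hw.of_le one_le_two)
    (continuousOn_const.mul hw.continuousOn) hinterior
  intro x hx
  by_cases hdx : DifferentiableAt ℝ w x
  · rw [← hdx.derivWithin (uniqueDiffOn_Iic Θ x hx)]
    exact ⟨hmono.derivWithin_nonneg, hbound x hx⟩
  · rw [deriv_zero_of_not_differentiableAt hdx]
    have := (hw01 x hx).1
    exact ⟨le_rfl, by positivity⟩
end
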